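/- arXiv:1903.02686 — 2 statements merged into one kernel-verified Lean document; each statement's English description precedes it below -/
import Mathlib

section
/- Consider a finite feasible set S and two objective functions on S: a reward g(x) taking values in a set of integers scaled by a positive constant, and a cost h(x) satisfying 0 ≤ h(x) ≤ B for all x ∈ S. Fix ε with 0 < ε < 1/(B+1) and define U(x) = ε·h(x) + (1-ε)·(C - g(x)) where g takes positive integer values and C is a constant upper bound. Then x* minimizes U over S if and only if x* maximizes g over S and, among all maximizers of g, x* minimizes h. -/
theorem statement_4 {S : Type*} [Finite S] [Nonempty S]
    (g : S → ℤ) (h : S → ℝ) (B C ε : ℝ)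
    (hg : ∀ x, 0 ≤ g x) (hh : ∀ x, 0 ≤ h x ∧ h x ≤ B)
    (hC : ∀ x, (g x : ℝ) ≤ C)
    (hε0 : 0 < ε) (hε1 : ε < 1 / (B + 1))
    (U : S → ℝ) (hU : ∀ x, U x = ε * h x + (1 - ε) * (C - (g x : ℝ)))
    (x_star : S) :
    (∀ y, U x_star ≤ U y) ↔
      ((∀ y, g y ≤ g x_star) ∧ ∀ y, g y = g x_star → h x_star ≤ h y) := by
  have hB : 0 ≤ B := le_trans (hh x_star).1 (hh x_star).2
  have hB1 : 0 < B + 1 := by linarith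
  have hεB : ε * (B + 1) < 1 := by
    rwa [lt_div_iff₀ hB1] at hε1
  have key : ε * B < 1 - ε := by nlinarith
  have hε2 : ε < 1 := by nlinarith
  constructor
  · intro hmin
    have hgmax : ∀ y, g y ≤ g x_star := by
      intro y
      by_contra hlt
      push_neg at hlt
      have h1 : (g x_star : ℝ) + 1 ≤ (g y : ℝ) := by
        have : g x_star + 1 ≤ g y := hlt
        exact_mod_cast this
      have := hmin y
      rw [hU x_star, hU y] at this
      have h2 := (hh y).2
      have h3 := (hh x_star).1
      nlinarith [mul_nonneg (by linarith : (0:ℝ) ≤ 1 - ε) (by linarith : (0:ℝ) ≤ (g y : ℝ) - (g x_star : ℝ) - 1),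
        mul_nonneg hε0.le (by linarith : (0:ℝ) ≤ B - h y), mul_nonneg hε0.le h3]
    refine ⟨hgmax, fun y hy => ?_⟩
    have := hmin y
    rw [hU x_star, hU y] at this
    have : (g y : ℝ) = (g x_star : ℝ) := by exact_mod_cast hy
    nlinarith [hmin y, hU x_star, hU y]
  · rintro ⟨hgmax, hhmin⟩ y
    rw [hU x_star, hU y]
    rcases eq_or_lt_of_le (hgmax y) with heq | hlt
    · have h1 : (g y : ℝ) = (g x_star : ℝ) := by exact_mod_cast heq
      have h2 := hhmin y heq
      nlinarith
    · have h1 : (g y : ℝ) + 1 ≤ (g x_star : ℝ) := by exact_mod_cast hlt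
      have h2 := (hh x_star).2
      have h3 := (hh y).1
      nlinarith [mul_nonneg (by linarith : (0:ℝ) ≤ 1 - ε) (by linarith : (0:ℝ) ≤ (g x_star : ℝ) - (g y : ℝ) - 1),
        mul_nonneg hε0.le (by linarith : (0:ℝ) ≤ B - h x_star), mul_nonneg hε0.le h3]
end

section
/- If the optimal value of problem P1 is V and (Ã,B̃,C̃,F̃,P̃) achieves objective value V in P1, while (A*,B*,C*,F*,P*) is optimal for the single-stage problem P3 with 0 < ε < 1/(MP^{iot}+NP^{c}+1), then the scheduling rewards coincide: ∑_m w_m ∑_t c*_{m,t} = ∑_m w_m ∑_t c̃_{m,t}. (Abstract version: if x* minimizes U(x) = ε h(x) + (1-ε)(C - g(x)) over S, with g integer-valued and 0 ≤ h ≤ B, ε(B+1) < 1, then g(x*) = max_{x∈S} g(x).) -/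
theorem statement_19 {S : Type*} [Nonempty S]
    (g : S → ℤ) (h : S → ℝ) (B C ε : ℝ)
    (hg : ∀ x, 0 ≤ g x) (hh : ∀ x, 0 ≤ h x ∧ h x ≤ B)
    (hC : ∀ x, (g x : ℝ) ≤ C)
    (hε0 : 0 < ε) (hε1 : ε < 1 / (B + 1))
    (U : S → ℝ) (hU : ∀ x, U x = ε * h x + (1 - ε) * (C - (g x : ℝ)))
    (x_star : S) (hmin : ∀ y, U x_star ≤ U y) :
    ∀ y, g y ≤ g x_star := by
  intro y
  by_contra hcon
  push_neg at hcon
  have h1 : (g x_star : ℝ) + 1 ≤ (g y : ℝ) := by exact_mod_cast hcon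
  obtain ⟨x0⟩ := ‹Nonempty S›
  have hB : 0 ≤ B := le_trans (hh x0).1 (hh x0).2
  have hB1 : (0:ℝ) < B + 1 := by linarith
  have hε1' : ε * (B + 1) < 1 := by
    have := (lt_div_iff₀ hB1).mp hε1
    linarith
  have hUy := hmin y
  rw [hU x_star, hU y] at hUy
  have hhx := hh x_star
  have hhy := hh y
  have hε2 : ε < 1 := by nlinarith
  nlinarith [hUy, hhx.1, hhx.2, hhy.1, hhy.2, hε0, h1,
    mul_nonneg (by linarith : (0:ℝ) ≤ 1 - ε) (by linarith : (0:ℝ) ≤ (g y : ℝ) - (g x_star : ℝ) - 1)]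
end
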